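/- Let s ≥ 2 be an integer, p an odd prime, r(p) the rank of (f_n(s,-1)) modulo p, and e = ν_p(f_{r(p)}(s,-1)). Then for every positive integer n: ν_p(f_n(s,-1)) = ν_p(n) - ν_p(r(p)) + e if r(p) | n, and ν_p(f_n(s,-1)) = 0 otherwise. -/

import Mathlib

/-!
The sequence `f = genFib s (-1)` is a Lucas sequence with `Q = 1`. Its multiplication formula
`f (k * n) = f n * g k`, where `g = genFib (V n) (-1)` for the companion term `V n`, reduces
everything to the valuation of `g k`. The identity `V n ^ 2 - 4 = (s ^ 2 - 4) * f n ^ 2` shows that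
`p ∣ f n` forces `V n ≡ ±2 (mod p²)` for odd `p`, and then `g k ≡ ±k (mod p²)` because
`genFib (±2) (-1) k = ±k`. Hence `p ∣ g k ↔ p ∣ k` and `ν_p (g p) = 1`, which gives
`ν_p (f (k * n)) = ν_p (f n) + ν_p k` whenever `p ∣ f n`. The rank enters only through
`p ∣ f n → r ∣ n`, a consequence of the addition formula and the coprimality of consecutive
terms.
-/

/-- Generalized Fibonacci sequence: f 0 = 0, f 1 = 1, f (n+2) = s * f (n+1) + t * f n. -/
def genFib (s t : ℤ) : ℕ → ℤ
  | 0 => 0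
  | 1 => 1
  | n + 2 => s * genFib s t (n + 1) + t * genFib s t n

namespace genFib

@[simp] theorem zero (s t : ℤ) : genFib s t 0 = 0 := rfl

@[simp] theorem one (s t : ℤ) : genFib s t 1 = 1 := rfl

theorem succ_succ (s t : ℤ) (n : ℕ) :
    genFib s t (n + 2) = s * genFib s t (n + 1) + t * genFib s t n := rfl

theorem succ_succ_neg_one (s : ℤ) (n : ℕ) :
    genFib s (-1) (n + 2) = s * genFib s (-1) (n + 1) - genFib s (-1) n := by
  rw [succ_succ]; ring

theorem add_succ (s t : ℤ) (m k : ℕ) :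
    genFib s t (m + k + 1) =
      genFib s t (m + 1) * genFib s t (k + 1) + t * genFib s t m * genFib s t k := by
  induction m using Nat.twoStepInduction with
  | zero => simp
  | one => rw [add_comm 1 k, succ_succ, succ_succ]; simp
  | more m ih₁ ih₂ =>
    rw [show m + 2 + k + 1 = m + k + 1 + 2 by omega, succ_succ,
      show m + k + 1 + 1 = m + 1 + k + 1 by omega, ih₁, ih₂, succ_succ s t (m + 1),
      succ_succ s t m]
    ring

theorem sub_dvd_sub (a b t : ℤ) (k : ℕ) : a - b ∣ genFib a t k - genFib b t k := by
  induction k using Nat.twoStepInduction with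
  | zero => simp
  | one => simp
  | more k ih₁ ih₂ =>
    have h : genFib a t (k + 2) - genFib b t (k + 2) =
        a * (genFib a t (k + 1) - genFib b t (k + 1)) + (a - b) * genFib b t (k + 1) +
          t * (genFib a t k - genFib b t k) := by
      rw [succ_succ, succ_succ]; ring
    rw [h]
    exact dvd_add (dvd_add (ih₂.mul_left a) (dvd_mul_right _ _)) (ih₁.mul_left t)

theorem two_mul_of_sq_eq_one (ε : ℤ) (hε : ε ^ 2 = 1) (k : ℕ) :
    genFib (2 * ε) (-1) k = ε ^ (k + 1) * k := by
  induction k using Nat.twoStepInduction with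
  | zero => simp
  | one => simp [hε]
  | more k ih₁ ih₂ =>
    rw [succ_succ_neg_one, ih₁, ih₂]
    push_cast
    linear_combination (k : ℤ) * ε ^ (k + 1) * hε

theorem sq_sub_mul_add_sq (s : ℤ) (n : ℕ) :
    genFib s (-1) (n + 1) ^ 2 - s * genFib s (-1) (n + 1) * genFib s (-1) n +
      genFib s (-1) n ^ 2 = 1 := by
  induction n with
  | zero => simp
  | succ n ih => rw [succ_succ_neg_one]; linear_combination ih

theorem isCoprime_succ (s : ℤ) (n : ℕ) : IsCoprime (genFib s (-1) n) (genFib s (-1) (n + 1)) :=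
  ⟨genFib s (-1) n - s * genFib s (-1) (n + 1), genFib s (-1) (n + 1), by
    linear_combination sq_sub_mul_add_sq s n⟩

theorem natCast_le_and_lt_succ (s : ℤ) (hs : 2 ≤ s) (n : ℕ) :
    (n : ℤ) ≤ genFib s (-1) n ∧ genFib s (-1) n < genFib s (-1) (n + 1) := by
  induction n with
  | zero => simp
  | succ n ih =>
    obtain ⟨h₁, h₂⟩ := ih
    refine ⟨by push_cast; omega, ?_⟩
    rw [succ_succ_neg_one]
    nlinarith

theorem pos (s : ℤ) (hs : 2 ≤ s) {n : ℕ} (hn : 0 < n) : 0 < genFib s (-1) n := by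
  have := (natCast_le_and_lt_succ s hs n).1
  omega

/-- The companion Lucas sequence `V`: for `n ≥ 1` this is `f (n + 1) - f (n - 1)`. -/
def companion (s : ℤ) (n : ℕ) : ℤ := 2 * genFib s (-1) (n + 1) - s * genFib s (-1) n

theorem companion_succ_succ (s : ℤ) (n : ℕ) :
    companion s (n + 2) = s * companion s (n + 1) - companion s n := by
  unfold companion
  rw [succ_succ_neg_one s (n + 1), succ_succ_neg_one s n]
  ring

theorem companion_sq_sub_four (s : ℤ) (n : ℕ) :
    companion s n ^ 2 - 4 = (s ^ 2 - 4) * genFib s (-1) n ^ 2 := by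
  unfold companion
  linear_combination 4 * sq_sub_mul_add_sq s n

theorem add_add_eq_companion_mul (s : ℤ) (n j : ℕ) :
    genFib s (-1) (2 * n + j) + genFib s (-1) j = companion s n * genFib s (-1) (n + j) := by
  induction n using Nat.twoStepInduction generalizing j with
  | zero => simp [companion]; ring
  | one =>
    have h : companion s 1 = s := by simp [companion, succ_succ_neg_one s 0]; ring
    rw [h, show 2 * 1 + j = j + 2 by omega, add_comm 1 j, succ_succ_neg_one]
    ring
  | more n ih₁ ih₂ =>
    have h₁ := ih₁ (j + 2)
    have h₂ := ih₂ (j + 1)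
    rw [show 2 * n + (j + 2) = 2 * n + j + 2 by omega] at h₁
    rw [show 2 * (n + 1) + (j + 1) = 2 * n + j + 2 + 1 by omega,
      show n + 1 + (j + 1) = n + (j + 2) by omega] at h₂
    rw [show 2 * (n + 2) + j = 2 * n + j + 2 + 2 by omega, show n + 2 + j = n + (j + 2) by omega,
      succ_succ_neg_one s (2 * n + j + 2)]
    linear_combination s * h₂ - h₁ + succ_succ_neg_one s j -
      genFib s (-1) (n + (j + 2)) * companion_succ_succ s n

theorem mul_eq_mul_companion (s : ℤ) (n k : ℕ) :
    genFib s (-1) (k * n) = genFib s (-1) n * genFib (companion s n) (-1) k := by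
  induction k using Nat.twoStepInduction with
  | zero => simp
  | one => simp
  | more k ih₁ ih₂ =>
    have h := add_add_eq_companion_mul s n (k * n)
    rw [show n + k * n = (k + 1) * n by ring] at h
    rw [show (k + 2) * n = 2 * n + k * n by ring, succ_succ_neg_one (companion s n) k]
    linear_combination h + companion s n * ih₂ - ih₁

theorem dvd_of_dvd (s : ℤ) {m n : ℕ} (h : m ∣ n) : genFib s (-1) m ∣ genFib s (-1) n := by
  obtain ⟨k, rfl⟩ := h
  exact ⟨_, mul_comm m k ▸ mul_eq_mul_companion s m k⟩

theorem prime_dvd_add_iff (s : ℤ) {q : ℤ} (hq : Prime q) {m : ℕ} (hm : q ∣ genFib s (-1) m)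
    (k : ℕ) :
    q ∣ genFib s (-1) (m + k) ↔ q ∣ genFib s (-1) k := by
  cases k with
  | zero => simpa using hm
  | succ j =>
    have hm₁ : ¬ q ∣ genFib s (-1) (m + 1) := fun h =>
      hq.not_isUnit ((isCoprime_succ s m).isUnit_of_dvd' hm h)
    rw [← add_assoc, add_succ, dvd_add_left ((hm.mul_left _).mul_right _)]
    exact ⟨fun h => (hq.dvd_or_dvd h).resolve_left hm₁, fun h => h.mul_left _⟩

theorem dvd_of_prime_dvd_of_minimal (s : ℤ) {q : ℤ} (hq : Prime q) {r : ℕ} (hr : 0 < r)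
    (hrdvd : q ∣ genFib s (-1) r)
    (hleast : ∀ l : ℕ, 0 < l → q ∣ genFib s (-1) l → r ≤ l)
    {n : ℕ} (hn : q ∣ genFib s (-1) n) : r ∣ n := by
  have hdiv : q ∣ genFib s (-1) (n / r * r) := hrdvd.trans (dvd_of_dvd s (dvd_mul_left r _))
  rw [← Nat.div_add_mod n r, mul_comm, prime_dvd_add_iff s hq hdiv] at hn
  by_contra hnr
  have := hleast _ (Nat.pos_of_ne_zero fun h => hnr (Nat.dvd_of_mod_eq_zero h)) hn
  exact absurd (Nat.mod_lt n hr) (not_lt.mpr this)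

theorem exists_sq_dvd_companion_sub {p : ℕ} [Fact p.Prime] (hodd : Odd p) (s : ℤ) {n : ℕ}
    (hn : (p : ℤ) ∣ genFib s (-1) n) :
    ∃ ε : ℤ, ε ^ 2 = 1 ∧ (p : ℤ) ^ 2 ∣ companion s n - 2 * ε := by
  have hq : Prime (p : ℤ) := Nat.prime_iff_prime_int.mp Fact.out
  have hprod : (p : ℤ) ^ 2 ∣ (companion s n - 2) * (companion s n + 2) := by
    rw [show (companion s n - 2) * (companion s n + 2) = companion s n ^ 2 - 4 by ring,
      companion_sq_sub_four]
    exact (pow_dvd_pow_of_dvd hn 2).mul_left _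
  have h4 : ¬ (p : ℤ) ∣ 4 := by
    intro h
    have hcop : p.Coprime (2 ^ 2) := (Nat.coprime_two_right.mpr hodd).pow_right 2
    exact (Fact.out : p.Prime).one_lt.ne' (hcop.eq_one_of_dvd (by exact_mod_cast h))
  by_cases hsub : (p : ℤ) ∣ companion s n - 2
  · refine ⟨1, one_pow 2, ?_⟩
    have hadd : ¬ (p : ℤ) ∣ companion s n + 2 := fun h => h4 (by simpa using dvd_sub h hsub)
    simpa using hq.pow_dvd_of_dvd_mul_right 2 hadd hprod
  · exact ⟨-1, by norm_num, by simpa using hq.pow_dvd_of_dvd_mul_left 2 hsub hprod⟩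

section UnitCongruence

variable {w ε : ℤ} (hε : ε ^ 2 = 1)
include hε

theorem dvd_sub_unit_mul {m : ℤ} (hw : m ∣ w - 2 * ε) (k : ℕ) :
    m ∣ genFib w (-1) k - ε ^ (k + 1) * k := by
  rw [← two_mul_of_sq_eq_one ε hε k]
  exact hw.trans (sub_dvd_sub _ _ _ k)

theorem natCast_dvd_iff {p : ℕ} (hw : (p : ℤ) ∣ w - 2 * ε) (k : ℕ) :
    (p : ℤ) ∣ genFib w (-1) k ↔ p ∣ k := by
  rw [dvd_iff_dvd_of_dvd_sub (dvd_sub_unit_mul hε hw k),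
    ((IsUnit.of_pow_eq_one hε two_ne_zero).pow _).dvd_mul_left, Int.natCast_dvd_natCast]

theorem padicValInt_self {p : ℕ} [Fact p.Prime] (hw : (p : ℤ) ^ 2 ∣ w - 2 * ε) :
    padicValInt p (genFib w (-1) p) = 1 := by
  have hq : Prime (p : ℤ) := Nat.prime_iff_prime_int.mp Fact.out
  have hsq : ¬ (p : ℤ) ^ 2 ∣ genFib w (-1) p := by
    rw [dvd_iff_dvd_of_dvd_sub (dvd_sub_unit_mul hε hw p),
      ((IsUnit.of_pow_eq_one hε two_ne_zero).pow _).dvd_mul_left, sq]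
    intro h
    exact hq.not_dvd_one ((mul_dvd_mul_iff_left hq.ne_zero).mp (by rwa [mul_one]))
  have hdvd := (natCast_dvd_iff hε ((dvd_pow_self _ two_ne_zero).trans hw) p).mpr dvd_rfl
  have hne : genFib w (-1) p ≠ 0 := fun h => hsq (h ▸ dvd_zero _)
  have h₁ := (padicValInt_dvd_iff 1 _).mp (pow_one (p : ℤ) ▸ hdvd)
  have h₂ := mt (padicValInt_dvd_iff 2 (genFib w (-1) p)).mpr hsq
  omega

end UnitCongruence

section Valuation

variable {s : ℤ} (hs : 2 ≤ s) {p : ℕ} [Fact p.Prime] (hodd : Odd p) {n : ℕ} (hn : 0 < n)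
  (hpn : (p : ℤ) ∣ genFib s (-1) n)
include hs hodd hn hpn

theorem padicValInt_mul_of_not_dvd {k : ℕ} (hk : ¬ p ∣ k) :
    padicValInt p (genFib s (-1) (k * n)) = padicValInt p (genFib s (-1) n) := by
  obtain ⟨ε, hε, hw⟩ := exists_sq_dvd_companion_sub hodd s hpn
  have hg : ¬ (p : ℤ) ∣ genFib (companion s n) (-1) k :=
    (natCast_dvd_iff hε ((dvd_pow_self _ two_ne_zero).trans hw) k).not.mpr hk
  rw [mul_eq_mul_companion, padicValInt.mul (pos s hs hn).ne' fun h => hg (by simp [h]),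
    padicValInt.eq_zero_of_not_dvd hg, add_zero]

theorem padicValInt_prime_mul :
    padicValInt p (genFib s (-1) (p * n)) = padicValInt p (genFib s (-1) n) + 1 := by
  obtain ⟨ε, hε, hw⟩ := exists_sq_dvd_companion_sub hodd s hpn
  have hg := padicValInt_self hε hw
  rw [mul_eq_mul_companion, padicValInt.mul (pos s hs hn).ne' fun h => by simp [h] at hg, hg]

theorem padicValInt_pow_mul (a : ℕ) :
    padicValInt p (genFib s (-1) (p ^ a * n)) = padicValInt p (genFib s (-1) n) + a := by
  induction a with
  | zero => simp
  | succ a ih =>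
    have hpos : 0 < p ^ a * n := Nat.mul_pos (pow_pos (Fact.out : p.Prime).pos a) hn
    rw [pow_succ, mul_comm _ p, mul_assoc,
      padicValInt_prime_mul hs hodd hpos (hpn.trans (dvd_of_dvd s (dvd_mul_left n _))), ih]
    omega

theorem padicValInt_mul {k : ℕ} (hk : 0 < k) :
    padicValInt p (genFib s (-1) (k * n)) = padicValInt p (genFib s (-1) n) + padicValNat p k := by
  have hp : p.Prime := Fact.out
  obtain ⟨a, m, hm, rfl⟩ := Nat.exists_eq_pow_mul_and_not_dvd hk.ne' p hp.one_lt.ne'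
  have hm₀ : m ≠ 0 := by rintro rfl; exact hm (dvd_zero p)
  have hpos : 0 < p ^ a * n := Nat.mul_pos (pow_pos hp.pos a) hn
  rw [show p ^ a * m * n = m * (p ^ a * n) by ring,
    padicValInt_mul_of_not_dvd hs hodd hpos (hpn.trans (dvd_of_dvd s (dvd_mul_left n _))) hm,
    padicValInt_pow_mul hs hodd hn hpn, padicValNat.mul (pow_ne_zero _ hp.ne_zero) hm₀,
    padicValNat.prime_pow, padicValNat.eq_zero_of_not_dvd hm, add_zero]

end Valuation

end genFib

/-- p-adic valuation of f_n(s,-1) in terms of the rank r(p). -/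
theorem padicVal_fib (s : ℤ) (hs : 2 ≤ s) (p : ℕ) (hp : p.Prime) (hodd : Odd p)
    (r : ℕ) (hr : 0 < r) (hrdvd : (p : ℤ) ∣ genFib s (-1) r)
    (hleast : ∀ l : ℕ, 0 < l → (p : ℤ) ∣ genFib s (-1) l → r ≤ l)
    (e : ℕ) (he : e = padicValInt p (genFib s (-1) r)) :
    ∀ n : ℕ, 0 < n →
      (r ∣ n → (padicValInt p (genFib s (-1) n) : ℤ) =
        (padicValNat p n : ℤ) - (padicValNat p r : ℤ) + (e : ℤ)) ∧
      (¬ r ∣ n → padicValInt p (genFib s (-1) n) = 0) := by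
  have := Fact.mk hp
  intro n hn
  refine ⟨?_, fun hnr => padicValInt.eq_zero_of_not_dvd fun h =>
    hnr (genFib.dvd_of_prime_dvd_of_minimal s (Nat.prime_iff_prime_int.mp hp) hr hrdvd hleast h)⟩
  rintro ⟨k, rfl⟩
  have hk : 0 < k := Nat.pos_of_mul_pos_left hn
  rw [mul_comm, genFib.padicValInt_mul hs hodd hr hrdvd hk, padicValNat.mul hk.ne' hr.ne', ← he]
  push_cast
  ring
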